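/- Let C be finite, N_i > 0, A_G diagonal positive definite. For each i define payoff J^i(x) = (1/2)N_i²(x^i)ᵀA_G x^i + N_i (x^i)ᵀ(A_G σ(x^{-i}) + b_G) on convex compact sets K̄_i contained in the probability simplex of ℝ^m. Then the matrix Γ(x) = G(x) + G(x)ᵀ, where G(x) is the Jacobian of the map g(x) = [−∇_{x^i} J^i(x)]_{i∈C}, satisfies xᵀ Γ x = −2(∑_i N_i x^i)ᵀ A_G (∑_i N_i x^i) < 0 for every x ∈ ∏_i K̄_i. -/

import Mathlib

/-!
Rosen's pseudo-gradient `g(x)_i = -∇_{x^i} J^i(x)` of this quadratic game is the affine map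
`x ↦ (-N_i (A σ(x) + b))_i` with `σ(x) = ∑_i N_i x^i`, because the own-strategy term of `J^i`
supplies exactly the missing summand `N_i x^i` of `σ(x)`. Its Jacobian is therefore the constant
`v ↦ (-N_i A σ(v))_i`, and pairing with `x` collapses both halves of `xᵀΓx` to `-σ(x)ᵀ A σ(x)`.
Finally `σ(x) ≠ 0` on the simplex, since its coordinates sum to `∑_i N_i > 0`.
-/

open Matrix Finset

section

variable {n : Type*} [Fintype n]

theorem Matrix.IsSymm.dotProduct_mulVec_comm {R : Type*} [CommSemiring R] {A : Matrix n n R}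
    (hA : A.IsSymm) (u v : n → R) :
    u ⬝ᵥ A *ᵥ v = v ⬝ᵥ A *ᵥ u := by
  rw [dotProduct_mulVec, ← mulVec_transpose, hA.eq, dotProduct_comm]

theorem fderiv_quadratic_apply {A : Matrix n n ℝ} (hA : A.IsSymm) (a b : ℝ) (w y h : n → ℝ) :
    fderiv ℝ (fun y => (1 / 2) * a * (y ⬝ᵥ A *ᵥ y) + b * (y ⬝ᵥ w)) y h
      = h ⬝ᵥ (a • A *ᵥ y + b • w) := by
  have hmulVec := (LinearMap.toContinuousLinearMap A.mulVecLin).hasFDerivAt (x := y)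
  have hquad := ((dotProductBilin ℝ ℝ).toContinuousBilinearMap).hasFDerivAt_of_bilinear
    (hasFDerivAt_id y) hmulVec
  have hlin := (LinearMap.toContinuousLinearMap (dotProductBilin ℝ ℝ w)).hasFDerivAt (x := y)
  have hderiv := (hquad.const_mul ((1 / 2) * a)).fun_add (hlin.const_mul b)
  simp only [id, LinearMap.toContinuousBilinearMap_apply, LinearMap.coe_toContinuousLinearMap',
    Matrix.mulVecLin_apply, dotProductBilin_apply_apply, dotProduct_comm w] at hderiv
  rw [hderiv.fderiv]
  simp only [_root_.add_apply, _root_.smul_apply,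
    ContinuousLinearMap.precompR_apply, ContinuousLinearMap.precompL_apply,
    ContinuousLinearMap.compL_apply, ContinuousLinearMap.comp_apply, ContinuousLinearMap.id_apply,
    LinearMap.coe_toContinuousLinearMap', LinearMap.toContinuousBilinearMap_apply,
    dotProductBilin_apply_apply, mulVecLin_apply, smul_eq_mul, dotProduct_add, dotProduct_smul,
    dotProduct_comm w, hA.dotProduct_mulVec_comm y h]
  ring

variable {C : Type*} [Fintype C]

theorem sum_smul_ne_zero_of_mem_stdSimplex [Nonempty C] {N : C → ℝ} (hN : ∀ i, 0 < N i)
    {x : C → n → ℝ} (hx : ∀ i, x i ∈ stdSimplex ℝ n) : ∑ i, N i • x i ≠ 0 := by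
  intro h
  have hmass : ∑ k, (∑ i, N i • x i) k = ∑ i, N i := by
    simp only [Finset.sum_apply, Pi.smul_apply, smul_eq_mul]
    rw [sum_comm]
    exact sum_congr rfl fun i _ => by rw [← mul_sum, (hx i).2, mul_one]
  have hpos : 0 < ∑ i, N i := sum_pos (fun i _ => hN i) univ_nonempty
  rw [h] at hmass
  simp only [Pi.zero_apply, sum_const_zero] at hmass
  linarith

def pseudoGradient (N : C → ℝ) (A : Matrix n n ℝ) (b : n → ℝ) (x : C → n → ℝ) : C → n → ℝ :=
  fun i => -(N i • (A *ᵥ ∑ j, N j • x j + b))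

theorem fderiv_pseudoGradient_apply (N : C → ℝ) (A : Matrix n n ℝ) (b : n → ℝ)
    (x v : C → n → ℝ) :
    fderiv ℝ (pseudoGradient N A b) x v = fun i => -(N i • A *ᵥ ∑ j, N j • v j) := by
  let L : (C → n → ℝ) →L[ℝ] C → n → ℝ := LinearMap.toContinuousLinearMap <|
    LinearMap.pi fun i => -N i • (A.mulVecLin ∘ₗ ∑ j, N j • LinearMap.proj j)
  have hL : pseudoGradient N A b = fun z => L z + fun i => -(N i • b) := by
    funext z i
    simp [L, pseudoGradient, mulVec_sum, mulVec_smul, add_comm]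
  rw [hL, (L.hasFDerivAt.add_const _).fderiv]
  funext i
  simp [L, mulVec_sum, mulVec_smul]

variable [DecidableEq C]

noncomputable def payoff (N : C → ℝ) (A : Matrix n n ℝ) (b : n → ℝ) (i : C)
    (x : C → n → ℝ) : ℝ :=
  (1 / 2) * N i ^ 2 * (x i ⬝ᵥ A *ᵥ x i)
    + N i * (x i ⬝ᵥ (A *ᵥ (∑ j ∈ univ.erase i, N j • x j) + b))

theorem payoff_update (N : C → ℝ) (A : Matrix n n ℝ) (b : n → ℝ) (i : C) (x : C → n → ℝ)
    (y : n → ℝ) : payoff N A b i (Function.update x i y) =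
      (1 / 2) * N i ^ 2 * (y ⬝ᵥ A *ᵥ y)
        + N i * (y ⬝ᵥ (A *ᵥ (∑ j ∈ univ.erase i, N j • x j) + b)) := by
  have hothers : ∑ j ∈ univ.erase i, N j • Function.update x i y j
      = ∑ j ∈ univ.erase i, N j • x j :=
    sum_congr rfl fun j hj => by rw [Function.update_of_ne (ne_of_mem_erase hj)]
  rw [payoff, Function.update_self, hothers]

theorem fderiv_payoff_update_apply (N : C → ℝ) {A : Matrix n n ℝ} (hA : A.IsSymm) (b : n → ℝ)
    (i : C) (x : C → n → ℝ) (h : n → ℝ) :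
    fderiv ℝ (fun y => payoff N A b i (Function.update x i y)) (x i) h
      = h ⬝ᵥ N i • (A *ᵥ ∑ j, N j • x j + b) := by
  simp_rw [payoff_update, fderiv_quadratic_apply hA, ← add_sum_erase _ _ (mem_univ i)]
  congr 1
  simp only [mulVec_add, mulVec_smul, smul_add, smul_smul, pow_two]
  abel

end

theorem stmt14_general {C : Type*} [Fintype C] [DecidableEq C] [Nonempty C] (m : ℕ)
    (N : C → ℝ) (hN : ∀ i, 0 < N i)
    (AG : Matrix (Fin m) (Fin m) ℝ)
    (hpd : AG.PosDef) (bG : Fin m → ℝ)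
    (K : C → Set (Fin m → ℝ))
    (hKsimplex : ∀ i, K i ⊆ stdSimplex ℝ (Fin m))
    (J : C → (C → Fin m → ℝ) → ℝ)
    (hJ : ∀ i x, J i x =
      (1 / 2) * (N i) ^ 2 * (x i ⬝ᵥ AG *ᵥ x i)
        + N i * (x i ⬝ᵥ (AG *ᵥ (∑ j ∈ univ.erase i, N j • x j) + bG)))
    (g : (C → Fin m → ℝ) → (C → Fin m → ℝ))
    (hg : ∀ x i k, g x i k =
      -((fderiv ℝ (fun y => J i (Function.update x i y)) (x i)) (Pi.single k 1)))
    (x : C → Fin m → ℝ) (hx : ∀ i, x i ∈ K i) :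
    ((∑ i, x i ⬝ᵥ (fderiv ℝ g x) x i) + ∑ i, (fderiv ℝ g x) x i ⬝ᵥ x i)
        = -2 * ((∑ i, N i • x i) ⬝ᵥ AG *ᵥ (∑ i, N i • x i)) ∧
      ((∑ i, x i ⬝ᵥ (fderiv ℝ g x) x i) + ∑ i, (fderiv ℝ g x) x i ⬝ᵥ x i) < 0 := by
  have hA : AG.IsSymm := isHermitian_iff_isSymm.mp hpd.isHermitian
  obtain rfl : J = payoff N AG bG := funext₂ hJ
  have hg' : g = pseudoGradient N AG bG := by
    funext z i k
    rw [hg, fderiv_payoff_update_apply N hA, single_dotProduct, one_mul]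
    rfl
  set s := ∑ i, N i • x i
  have hGx : fderiv ℝ g x x = fun i => -(N i • AG *ᵥ s) := by
    rw [hg', fderiv_pseudoGradient_apply]
  have hform : (∑ i, x i ⬝ᵥ fderiv ℝ g x x i) + ∑ i, fderiv ℝ g x x i ⬝ᵥ x i
      = -2 * (s ⬝ᵥ AG *ᵥ s) := by
    have hpair : ∑ i, x i ⬝ᵥ N i • AG *ᵥ s = s ⬝ᵥ AG *ᵥ s := by
      simp only [s, sum_dotProduct, smul_dotProduct, dotProduct_smul]
    simp only [hGx, dotProduct_neg, dotProduct_comm _ (x _), sum_neg_distrib, hpair]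
    ring
  have hpos := hpd.dotProduct_mulVec_pos
    (sum_smul_ne_zero_of_mem_stdSimplex hN fun i => hKsimplex i (hx i))
  rw [star_trivial] at hpos
  exact ⟨hform, by linarith⟩

/-- Rosen's diagonal strict concavity computation: with `G(x)` the Jacobian of
`g(x) = [−∇_{x^i} J^i(x)]_i` and `Γ = G + Gᵀ`, we have
`xᵀΓx = −2 σ(x)ᵀ A_G σ(x) < 0` on the product of the strategy sets.
Here `xᵀΓx` is written as `xᵀG(x)x + (G(x)x)ᵀx`. -/
theorem stmt14 {C : Type*} [Fintype C] [DecidableEq C] [Nonempty C] (m : ℕ)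
    (N : C → ℝ) (hN : ∀ i, 0 < N i)
    (d : Fin m → ℝ) (AG : Matrix (Fin m) (Fin m) ℝ)
    (hAG : AG = Matrix.diagonal d) (hpd : AG.PosDef) (bG : Fin m → ℝ)
    (K : C → Set (Fin m → ℝ))
    (hKsimplex : ∀ i, K i ⊆ stdSimplex ℝ (Fin m))
    (hKconv : ∀ i, Convex ℝ (K i)) (hKcomp : ∀ i, IsCompact (K i))
    (J : C → (C → Fin m → ℝ) → ℝ)
    (hJ : ∀ i x, J i x =
      (1 / 2) * (N i) ^ 2 * (x i ⬝ᵥ AG *ᵥ x i)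
        + N i * (x i ⬝ᵥ (AG *ᵥ (∑ j ∈ univ.erase i, N j • x j) + bG)))
    (g : (C → Fin m → ℝ) → (C → Fin m → ℝ))
    (hg : ∀ x i k, g x i k =
      -((fderiv ℝ (fun y => J i (Function.update x i y)) (x i)) (Pi.single k 1)))
    (x : C → Fin m → ℝ) (hx : ∀ i, x i ∈ K i) :
    ((∑ i, x i ⬝ᵥ (fderiv ℝ g x) x i) + ∑ i, (fderiv ℝ g x) x i ⬝ᵥ x i)
        = -2 * ((∑ i, N i • x i) ⬝ᵥ AG *ᵥ (∑ i, N i • x i)) ∧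
      ((∑ i, x i ⬝ᵥ (fderiv ℝ g x) x i) + ∑ i, (fderiv ℝ g x) x i ⬝ᵥ x i) < 0 :=
  stmt14_general m N hN AG hpd bG K hKsimplex J hJ g hg x hx
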